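/- arXiv:2605.04571 — 2 statements merged into one kernel-verified Lean document; each statement's English description precedes it below -/
import Mathlib

section
/- Let κ ∈ (−1, 1) and λ1 ∈ [−1, 1]; set D := κ²λ1² − 1, s := κ·(λ1² − 1)/D, and τ := λ1·(κ² − 1)/D. Then the 4×4 complex matrix M := (1/2)(I⊗I) + (s/2)(σ1⊗I) + (τ/2)(σ1⊗σ1) − (λ1/2)(σ2⊗σ2) + (1/2)(σ3⊗σ3) is positive semidefinite if and only if κ = 0 or λ1 = 1 or λ1 = −1. -/
/-!
The diagonal entry of `M` at `|01⟩` vanishes, so positivity forces the whole `|01⟩` column to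
vanish; its `|11⟩` entry is `s / 2`, hence `s = 0`, i.e. `κ (λ₁² - 1) = 0`. Conversely, in that
case also `τ = λ₁`, and then `M = (1 + λ₁)/2 |Φ⁺⟩⟨Φ⁺| + (1 - λ₁)/2 |Φ⁻⟩⟨Φ⁻|` with the
unnormalised Bell vectors `Φ± = |00⟩ ± |11⟩`.
-/

open Matrix Kronecker ComplexOrder

noncomputable def σ1 : Matrix (Fin 2) (Fin 2) ℂ := !![0, 1; 1, 0]
noncomputable def σ2 : Matrix (Fin 2) (Fin 2) ℂ := !![0, -Complex.I; Complex.I, 0]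
noncomputable def σ3 : Matrix (Fin 2) (Fin 2) ℂ := !![1, 0; 0, -1]

theorem Matrix.PosSemidef.apply_eq_zero_of_diag_eq_zero {𝕜 n : Type*} [RCLike 𝕜] [Fintype n]
    [DecidableEq n] {A : Matrix n n 𝕜} (hA : A.PosSemidef) {i : n} (hi : A i i = 0) (j : n) :
    A j i = 0 := by
  have hAi : A *ᵥ Pi.single i 1 = 0 := (hA.dotProduct_mulVec_zero_iff _).1 (by simp [hi])
  simpa using congrFun hAi j

noncomputable def reverseChoi (s τ lam : ℝ) : Matrix (Fin 2 × Fin 2) (Fin 2 × Fin 2) ℂ :=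
  ((1 : ℝ) / 2 : ℝ) • ((1 : Matrix (Fin 2) (Fin 2) ℂ) ⊗ₖ (1 : Matrix (Fin 2) (Fin 2) ℂ))
    + ((s / 2 : ℝ) : ℂ) • (σ1 ⊗ₖ (1 : Matrix (Fin 2) (Fin 2) ℂ))
    + ((τ / 2 : ℝ) : ℂ) • (σ1 ⊗ₖ σ1)
    - ((lam / 2 : ℝ) : ℂ) • (σ2 ⊗ₖ σ2)
    + (((1 : ℝ) / 2 : ℝ) : ℂ) • (σ3 ⊗ₖ σ3)

lemma reverseChoi_apply_zero_one_zero_one (s τ lam : ℝ) :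
    reverseChoi s τ lam (0, 1) (0, 1) = 0 := by
  simp [reverseChoi, σ1, σ2, σ3]

lemma reverseChoi_apply_one_one_zero_one (s τ lam : ℝ) :
    reverseChoi s τ lam (1, 1) (0, 1) = (s / 2 : ℝ) := by
  simp [reverseChoi, σ1, σ2, σ3]

lemma eq_zero_of_posSemidef_reverseChoi {s τ lam : ℝ} (h : (reverseChoi s τ lam).PosSemidef) :
    s = 0 := by
  have hcol := h.apply_eq_zero_of_diag_eq_zero (reverseChoi_apply_zero_one_zero_one s τ lam) (1, 1)
  rw [reverseChoi_apply_one_one_zero_one] at hcol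
  exact_mod_cast (div_eq_zero_iff.1 (Complex.ofReal_eq_zero.1 hcol)).resolve_right two_ne_zero

lemma reverseChoi_zero_self (lam : ℝ) :
    reverseChoi 0 lam lam =
      ((1 + lam) / 2 : ℝ) • vecMulVec (Pi.single (0, 0) 1 + Pi.single (1, 1) 1)
          (star (Pi.single (0, 0) 1 + Pi.single (1, 1) 1))
        + ((1 - lam) / 2 : ℝ) • vecMulVec (Pi.single (0, 0) 1 - Pi.single (1, 1) 1)
          (star (Pi.single (0, 0) 1 - Pi.single (1, 1) 1)) := by
  ext ⟨i, j⟩ ⟨k, l⟩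
  fin_cases i <;> fin_cases j <;> fin_cases k <;> fin_cases l <;>
    simp [reverseChoi, σ1, σ2, σ3, vecMulVec_apply] <;> ring

lemma posSemidef_reverseChoi_zero_self {lam : ℝ} (hlam : lam ∈ Set.Icc (-1) 1) :
    (reverseChoi 0 lam lam).PosSemidef := by
  rw [reverseChoi_zero_self]
  exact ((posSemidef_vecMulVec_self_star _).smul (by linarith [hlam.1])).add
    ((posSemidef_vecMulVec_self_star _).smul (by linarith [hlam.2]))

lemma sq_mul_sq_sub_one_ne_zero {κ lam : ℝ} (hκ : κ ∈ Set.Ioo (-1) 1)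
    (hlam : lam ∈ Set.Icc (-1) 1) :
    κ ^ 2 * lam ^ 2 - 1 ≠ 0 := by
  have hκ2 : κ ^ 2 < 1 := (sq_lt_one_iff_abs_lt_one κ).2 (abs_lt.2 hκ)
  have hlam2 : lam ^ 2 ≤ 1 := (sq_le_one_iff_abs_le_one lam).2 (abs_le.2 hlam)
  nlinarith [sq_nonneg lam]

lemma mul_sq_sub_one_eq_zero_iff {R : Type*} [Ring R] [NoZeroDivisors R] {κ lam : R} :
    κ * (lam ^ 2 - 1) = 0 ↔ κ = 0 ∨ lam = 1 ∨ lam = -1 := by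
  rw [mul_eq_zero, sub_eq_zero, sq_eq_one_iff]

lemma mul_sq_sub_one_div_eq_self {K : Type*} [Field K] {κ lam : K}
    (hD : κ ^ 2 * lam ^ 2 - 1 ≠ 0) (h : κ = 0 ∨ lam = 1 ∨ lam = -1) :
    lam * (κ ^ 2 - 1) / (κ ^ 2 * lam ^ 2 - 1) = lam := by
  rw [div_eq_iff hD]
  rcases h with rfl | rfl | rfl <;> ring

/-- reverse-direction Choi matrix of a phase-damping channel in the
σ3 basis (λ3 = 1, λ2 = −λ1). -/
theorem stmt11 (κ lam1 D s τ : ℝ) (hκ : κ ∈ Set.Ioo (-1 : ℝ) 1)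
    (hlam1 : lam1 ∈ Set.Icc (-1 : ℝ) 1)
    (hD : D = κ ^ 2 * lam1 ^ 2 - 1)
    (hs : s = κ * (lam1 ^ 2 - 1) / D)
    (hτ : τ = lam1 * (κ ^ 2 - 1) / D) :
    (((1 : ℝ) / 2 : ℝ) • (((1 : Matrix (Fin 2) (Fin 2) ℂ) ⊗ₖ (1 : Matrix (Fin 2) (Fin 2) ℂ)))
        + ((s / 2 : ℝ) : ℂ) • (σ1 ⊗ₖ (1 : Matrix (Fin 2) (Fin 2) ℂ))
        + ((τ / 2 : ℝ) : ℂ) • (σ1 ⊗ₖ σ1)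
        - ((lam1 / 2 : ℝ) : ℂ) • (σ2 ⊗ₖ σ2)
        + (((1 : ℝ) / 2 : ℝ) : ℂ) • (σ3 ⊗ₖ σ3)).PosSemidef
    ↔ (κ = 0 ∨ lam1 = 1 ∨ lam1 = -1) := by
  subst hD
  have hD0 := sq_mul_sq_sub_one_ne_zero hκ hlam1
  have hs0 : s = 0 ↔ κ = 0 ∨ lam1 = 1 ∨ lam1 = -1 := by
    rw [hs, div_eq_zero_iff, or_iff_left hD0, mul_sq_sub_one_eq_zero_iff]
  change (reverseChoi s τ lam1).PosSemidef ↔ _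
  refine ⟨fun h => hs0.1 (eq_zero_of_posSemidef_reverseChoi h), fun h => ?_⟩
  rw [hs0.2 h, hτ, mul_sq_sub_one_div_eq_self hD0 h]
  exact posSemidef_reverseChoi_zero_self hlam1
end

section
/- Let 𝓑 be the real vector space of Hermitian 16×16 complex matrices, regarded as matrices on the four-fold Kronecker product ℂ²⊗ℂ²⊗ℂ²⊗ℂ² (so dim_ℝ 𝓑 = 256). Let V1 be the real span of all matrices (I₄/4) ⊗ A ⊗ B, where I₄ is the 4×4 identity occupying the first two tensor factors and A, B are Hermitian 2×2 matrices with Tr B = 0; let V2 be the real span of all matrices A ⊗ B ⊗ (I₄/4), where A, B are Hermitian 2×2 matrices with Tr B = 0 and I₄ occupies the last two tensor factors; and let V3 be the real span of all matrices A1 ⊗ B1 ⊗ A2 ⊗ B2, where A1, B1, A2, B2 are Hermitian 2×2 matrices with Tr B1 = 0 and Tr B2 = 0. Then dim_ℝ(V1 + V2 + V3) = 168, and hence the quotient space 𝓑/(V1 + V2 + V3) has real dimension 88. -/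
open Matrix Kronecker

/-- The index type of the four-fold Kronecker product ℂ²⊗ℂ²⊗ℂ²⊗ℂ², grouped as
((I,1)×(O,1)) × ((I,2)×(O,2)). -/
abbrev ProcIdx : Type := (Fin 2 × Fin 2) × (Fin 2 × Fin 2)

/-- 𝓑: the real vector space of Hermitian 16×16 complex matrices, as a real submodule of
the space of all 16×16 complex matrices. -/
noncomputable def HermB : Submodule ℝ (Matrix ProcIdx ProcIdx ℂ) :=
  selfAdjoint.submodule ℝ (Matrix ProcIdx ProcIdx ℂ)

/-- Generators of V1: matrices (I₄/4) ⊗ A ⊗ B with A, B Hermitian and Tr B = 0. -/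
def genS1 : Set (Matrix ProcIdx ProcIdx ℂ) :=
  {M | ∃ A B : Matrix (Fin 2) (Fin 2) ℂ, A.IsHermitian ∧ B.IsHermitian ∧ B.trace = 0 ∧
    M = (((1 : ℂ) / 4) • (1 : Matrix (Fin 2 × Fin 2) (Fin 2 × Fin 2) ℂ)) ⊗ₖ (A ⊗ₖ B)}

/-- Generators of V2: matrices A ⊗ B ⊗ (I₄/4) with A, B Hermitian and Tr B = 0. -/
def genS2 : Set (Matrix ProcIdx ProcIdx ℂ) :=
  {M | ∃ A B : Matrix (Fin 2) (Fin 2) ℂ, A.IsHermitian ∧ B.IsHermitian ∧ B.trace = 0 ∧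
    M = (A ⊗ₖ B) ⊗ₖ (((1 : ℂ) / 4) • (1 : Matrix (Fin 2 × Fin 2) (Fin 2 × Fin 2) ℂ))}

/-- Generators of V3: matrices A1 ⊗ B1 ⊗ A2 ⊗ B2 with all factors Hermitian and
Tr B1 = Tr B2 = 0. -/
def genS3 : Set (Matrix ProcIdx ProcIdx ℂ) :=
  {M | ∃ A1 B1 A2 B2 : Matrix (Fin 2) (Fin 2) ℂ,
    A1.IsHermitian ∧ B1.IsHermitian ∧ A2.IsHermitian ∧ B2.IsHermitian ∧
    B1.trace = 0 ∧ B2.trace = 0 ∧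
    M = (A1 ⊗ₖ B1) ⊗ₖ (A2 ⊗ₖ B2)}

/-- V1 + V2 + V3, as the real span of the union of the three generating sets. -/
noncomputable def Vsum : Submodule ℝ (Matrix ProcIdx ProcIdx ℂ) :=
  Submodule.span ℝ (genS1 ∪ genS2 ∪ genS3)

/-!
The Pauli words `σ_a ⊗ σ_b ⊗ σ_c ⊗ σ_d` are pairwise trace-orthogonal, so they form a complex
basis of all `16 × 16` matrices; since they are Hermitian, the coordinates of a Hermitian matrix
are real and they form a real basis of `𝓑`, which therefore has dimension `4⁴ = 256`.

Expanding every factor of a generator in the Pauli basis, a traceless factor using only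
`σ₁, σ₂, σ₃`, shows that `V1 + V2 + V3` lies in the span of the words with `(a, b) = (0, 0), d ≠ 0`,
or `(c, d) = (0, 0), b ≠ 0`, or `b ≠ 0, d ≠ 0`; conversely each of these words is a real multiple
of a generator. The three classes are disjoint, of sizes `12 + 12 + 144 = 168`, and the quotient
has dimension `256 - 168 = 88`.
-/

theorem Module.Basis.span_real_range_eq_selfAdjoint {ι E : Type*} [Fintype ι] [AddCommGroup E]
    [StarAddMonoid E] [Module ℂ E] [StarModule ℂ E] [Module ℝ E] [IsScalarTower ℝ ℂ E]
    [StarModule ℝ E] (b : Module.Basis ι ℂ E) (hb : ∀ i, IsSelfAdjoint (b i)) :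
    Submodule.span ℝ (Set.range b) = selfAdjoint.submodule ℝ E := by
  refine le_antisymm (Submodule.span_le.mpr ?_) fun x hx => ?_
  · rintro _ ⟨i, rfl⟩
    exact hb i
  have hstar : ∑ i, star (b.repr x i) • b i = x := by
    conv_rhs => rw [← (hx : IsSelfAdjoint x).star_eq, ← b.sum_repr x]
    simp only [star_sum, star_smul, (hb _).star_eq]
  have hreal (i : ι) : ((b.repr x i).re : ℂ) = b.repr x i := by
    refine Complex.conj_eq_iff_re.mp ?_
    conv_rhs => rw [← hstar, b.repr_sum_self]
    rfl
  rw [← b.sum_repr x]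
  refine Submodule.sum_mem _ fun i _ => ?_
  rw [← hreal, ← Complex.coe_algebraMap, algebraMap_smul]
  apply Submodule.smul_mem
  exact Submodule.subset_span ⟨i, rfl⟩

theorem Matrix.IsHermitian.kronecker {m n α : Type*} [CommMagma α] [StarMul α]
    {A : Matrix m m α} {B : Matrix n n α} (hA : A.IsHermitian) (hB : B.IsHermitian) :
    (A ⊗ₖ B).IsHermitian := by
  rw [IsHermitian, conjTranspose_kronecker, hA, hB]

theorem Matrix.kronecker_mem_span_image2 {R α l m n p : Type*} [CommSemiring R] [Semiring α]
    [Algebra R α] {s : Set (Matrix l m α)} {t : Set (Matrix n p α)} {A : Matrix l m α}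
    {B : Matrix n p α} (hA : A ∈ Submodule.span R s) (hB : B ∈ Submodule.span R t) :
    A ⊗ₖ B ∈ Submodule.span R (Set.image2 (· ⊗ₖ ·) s t) := by
  have h := Submodule.apply_mem_map₂ (kroneckerBilinear (R := R)) hA hB
  rw [Submodule.map₂_span_span] at h
  exact h

theorem Matrix.trace_kronecker_mul_kronecker {m n α : Type*} [Fintype m] [Fintype n]
    [CommSemiring α] (A C : Matrix m m α) (B D : Matrix n n α) :
    ((A ⊗ₖ B) * (C ⊗ₖ D)).trace = (A * C).trace * (B * D).trace := by
  rw [← mul_kronecker_mul, trace_kronecker]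

theorem Matrix.linearIndependent_of_trace_mul_eq_ite {ι n K : Type*} [Fintype n] [DecidableEq ι]
    [Field K] (v : ι → Matrix n n K) {c : K} (hc : c ≠ 0)
    (hv : ∀ i j, (v i * v j).trace = if i = j then c else 0) : LinearIndependent K v := by
  rw [linearIndependent_iff']
  intro s g hg i hi
  have h := congrArg (fun M => (v i * M).trace) hg
  simp only [Matrix.mul_sum, Matrix.mul_smul, trace_sum, trace_smul, hv, smul_eq_mul, mul_ite,
    mul_zero, Finset.sum_ite_eq, hi, if_true, trace_zero] at h
  exact (mul_eq_zero.mp h).resolve_right hc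

theorem Submodule.finrank_quotient_comap_subtype_add {K V : Type*} [DivisionRing K] [AddCommGroup V]
    [Module K V] {p q : Submodule K V} [FiniteDimensional K q] (h : p ≤ q) :
    Module.finrank K (q ⧸ p.comap q.subtype) + Module.finrank K p = Module.finrank K q := by
  rw [← (Submodule.comapSubtypeEquivOfLe h).finrank_eq]
  exact Submodule.finrank_quotient_add_finrank _

noncomputable def pauli : Fin 4 → Matrix (Fin 2) (Fin 2) ℂ
  | 0 => 1
  | 1 => !![0, 1; 1, 0]
  | 2 => !![0, -Complex.I; Complex.I, 0]
  | 3 => !![1, 0; 0, -1]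

theorem pauli_isHermitian (i : Fin 4) : (pauli i).IsHermitian := by
  fin_cases i <;> ext a b <;> fin_cases a <;> fin_cases b <;> simp [pauli]

theorem trace_pauli_mul_pauli (i j : Fin 4) :
    (pauli i * pauli j).trace = if i = j then 2 else 0 := by
  fin_cases i <;> fin_cases j <;>
    simp [pauli, trace, Fin.sum_univ_two] <;> norm_num

theorem trace_pauli (i : Fin 4) : (pauli i).trace = if i = 0 then 2 else 0 := by
  simpa [pauli] using trace_pauli_mul_pauli i 0

theorem trace_pauli_of_ne_zero {i : Fin 4} (hi : i ≠ 0) : (pauli i).trace = 0 := by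
  rw [trace_pauli, if_neg hi]

theorem linearIndependent_pauli : LinearIndependent ℂ pauli :=
  linearIndependent_of_trace_mul_eq_ite pauli two_ne_zero trace_pauli_mul_pauli

noncomputable def pauliBasis : Module.Basis (Fin 4) ℂ (Matrix (Fin 2) (Fin 2) ℂ) :=
  basisOfLinearIndependentOfCardEqFinrank linearIndependent_pauli (by simp [Module.finrank_matrix])

theorem Matrix.IsHermitian.mem_span_pauli {A : Matrix (Fin 2) (Fin 2) ℂ} (hA : A.IsHermitian) :
    A ∈ Submodule.span ℝ (pauli '' Set.univ) := by
  have := pauliBasis.span_real_range_eq_selfAdjoint fun i => by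
    simpa [pauliBasis] using (pauli_isHermitian i).isSelfAdjoint
  rw [pauliBasis, coe_basisOfLinearIndependentOfCardEqFinrank] at this
  rw [Set.image_univ, this]
  exact hA

theorem Matrix.IsHermitian.mem_span_pauli_of_trace_eq_zero {A : Matrix (Fin 2) (Fin 2) ℂ}
    (hA : A.IsHermitian) (htr : A.trace = 0) : A ∈ Submodule.span ℝ (pauli '' {0}ᶜ) := by
  have hspan := hA.mem_span_pauli
  rw [Set.image_univ] at hspan
  obtain ⟨c, rfl⟩ := Submodule.mem_span_range_iff_exists_fun ℝ |>.mp hspan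
  have hc : c 0 = 0 := by
    simpa [trace_sum, trace_pauli, Fin.sum_univ_four] using htr
  refine Submodule.sum_mem _ fun i _ => ?_
  rcases eq_or_ne i 0 with rfl | hi
  · simp [hc]
  · exact Submodule.smul_mem _ _ (Submodule.subset_span ⟨i, hi, rfl⟩)

noncomputable def pauliWord (t : (Fin 4 × Fin 4) × (Fin 4 × Fin 4)) : Matrix ProcIdx ProcIdx ℂ :=
  (pauli t.1.1 ⊗ₖ pauli t.1.2) ⊗ₖ (pauli t.2.1 ⊗ₖ pauli t.2.2)

theorem pauliWord_isHermitian (t : (Fin 4 × Fin 4) × (Fin 4 × Fin 4)) :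
    (pauliWord t).IsHermitian :=
  ((pauli_isHermitian _).kronecker (pauli_isHermitian _)).kronecker
    ((pauli_isHermitian _).kronecker (pauli_isHermitian _))

theorem trace_pauliWord_mul_pauliWord (s t : (Fin 4 × Fin 4) × (Fin 4 × Fin 4)) :
    (pauliWord s * pauliWord t).trace = if s = t then 16 else 0 := by
  simp only [pauliWord, trace_kronecker_mul_kronecker, trace_pauli_mul_pauli, Prod.ext_iff]
  split_ifs <;> simp_all
  norm_num

theorem linearIndependent_pauliWord : LinearIndependent ℂ pauliWord :=
  linearIndependent_of_trace_mul_eq_ite pauliWord (by norm_num) trace_pauliWord_mul_pauliWord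

noncomputable def pauliWordBasis :
    Module.Basis ((Fin 4 × Fin 4) × (Fin 4 × Fin 4)) ℂ (Matrix ProcIdx ProcIdx ℂ) :=
  basisOfLinearIndependentOfCardEqFinrank linearIndependent_pauliWord
    (by simp [Module.finrank_matrix])

theorem span_real_range_pauliWord_eq_hermB : Submodule.span ℝ (Set.range pauliWord) = HermB := by
  have := pauliWordBasis.span_real_range_eq_selfAdjoint fun t => by
    simpa [pauliWordBasis] using (pauliWord_isHermitian t).isSelfAdjoint
  rwa [pauliWordBasis, coe_basisOfLinearIndependentOfCardEqFinrank] at this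

theorem finrank_span_pauliWord_image (S : Finset ((Fin 4 × Fin 4) × (Fin 4 × Fin 4))) :
    Module.finrank ℝ (Submodule.span ℝ (pauliWord '' S)) = S.card := by
  rw [Set.image_eq_range]
  exact (finrank_span_eq_card
    ((linearIndependent_pauliWord.restrict_scalars' ℝ).comp _ Subtype.val_injective)).trans
    (by simp)

theorem finrank_hermB : Module.finrank ℝ HermB = 256 := by
  rw [← span_real_range_pauliWord_eq_hermB, ← Set.image_univ, ← Finset.coe_univ,
    finrank_span_pauliWord_image]
  simp

open Finset in
def vsumSupport : Finset ((Fin 4 × Fin 4) × (Fin 4 × Fin 4)) :=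
  ({0} ×ˢ {0}) ×ˢ (univ ×ˢ {0}ᶜ) ∪ (univ ×ˢ {0}ᶜ) ×ˢ ({0} ×ˢ {0}) ∪
    (univ ×ˢ {0}ᶜ) ×ˢ (univ ×ˢ {0}ᶜ)

open Set in
theorem coe_vsumSupport : (vsumSupport : Set ((Fin 4 × Fin 4) × (Fin 4 × Fin 4))) =
    ({0} ×ˢ {0}) ×ˢ (univ ×ˢ {0}ᶜ) ∪ (univ ×ˢ {0}ᶜ) ×ˢ ({0} ×ˢ {0}) ∪
      (univ ×ˢ {0}ᶜ) ×ˢ (univ ×ˢ {0}ᶜ) := by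
  simp only [vsumSupport, Finset.coe_union, Finset.coe_product, Finset.coe_singleton,
    Finset.coe_univ, Finset.coe_compl]

theorem card_vsumSupport : vsumSupport.card = 168 := by rfl

theorem kronecker_mem_span_pauliWord_image {s₁ t₁ s₂ t₂ : Set (Fin 4)}
    {A₁ B₁ A₂ B₂ : Matrix (Fin 2) (Fin 2) ℂ} (hA₁ : A₁ ∈ Submodule.span ℝ (pauli '' s₁))
    (hB₁ : B₁ ∈ Submodule.span ℝ (pauli '' t₁)) (hA₂ : A₂ ∈ Submodule.span ℝ (pauli '' s₂))
    (hB₂ : B₂ ∈ Submodule.span ℝ (pauli '' t₂)) :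
    (A₁ ⊗ₖ B₁) ⊗ₖ (A₂ ⊗ₖ B₂) ∈ Submodule.span ℝ (pauliWord '' ((s₁ ×ˢ t₁) ×ˢ (s₂ ×ˢ t₂))) := by
  refine Submodule.span_mono ?_ (kronecker_mem_span_image2 (kronecker_mem_span_image2 hA₁ hB₁)
    (kronecker_mem_span_image2 hA₂ hB₂))
  rintro _ ⟨_, ⟨_, ⟨i, hi, rfl⟩, _, ⟨j, hj, rfl⟩, rfl⟩, _, ⟨_, ⟨k, hk, rfl⟩, _, ⟨l, hl, rfl⟩, rfl⟩,
    rfl⟩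
  exact ⟨((i, j), (k, l)), ⟨⟨hi, hj⟩, hk, hl⟩, rfl⟩

theorem quarter_smul_one_eq :
    ((1 : ℂ) / 4) • (1 : Matrix (Fin 2 × Fin 2) (Fin 2 × Fin 2) ℂ)
      = (1 / 4 : ℝ) • (pauli 0 ⊗ₖ pauli 0) := by
  ext i j
  simp [pauli, one_apply]

theorem pauli_zero_mem_span : pauli 0 ∈ Submodule.span ℝ (pauli '' {0}) :=
  Submodule.subset_span (Set.mem_image_of_mem _ rfl)

theorem genS1_subset_span_pauliWord :
    genS1 ⊆ Submodule.span ℝ (pauliWord '' vsumSupport) := by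
  rintro _ ⟨A, B, hA, hB, hB₀, rfl⟩
  rw [quarter_smul_one_eq, smul_kronecker]
  refine Submodule.span_mono (Set.image_mono ?_) <| Submodule.smul_mem _ _ <|
    kronecker_mem_span_pauliWord_image pauli_zero_mem_span pauli_zero_mem_span hA.mem_span_pauli
      (hB.mem_span_pauli_of_trace_eq_zero hB₀)
  rw [coe_vsumSupport]
  exact Set.subset_union_left.trans Set.subset_union_left

theorem genS2_subset_span_pauliWord :
    genS2 ⊆ Submodule.span ℝ (pauliWord '' vsumSupport) := by
  rintro _ ⟨A, B, hA, hB, hB₀, rfl⟩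
  rw [quarter_smul_one_eq, kronecker_smul]
  refine Submodule.span_mono (Set.image_mono ?_) <| Submodule.smul_mem _ _ <|
    kronecker_mem_span_pauliWord_image hA.mem_span_pauli (hB.mem_span_pauli_of_trace_eq_zero hB₀)
      pauli_zero_mem_span pauli_zero_mem_span
  rw [coe_vsumSupport]
  exact Set.subset_union_right.trans Set.subset_union_left

theorem genS3_subset_span_pauliWord :
    genS3 ⊆ Submodule.span ℝ (pauliWord '' vsumSupport) := by
  rintro _ ⟨A₁, B₁, A₂, B₂, hA₁, hB₁, hA₂, hB₂, hB₁₀, hB₂₀, rfl⟩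
  refine Submodule.span_mono (Set.image_mono ?_) <|
    kronecker_mem_span_pauliWord_image hA₁.mem_span_pauli
      (hB₁.mem_span_pauli_of_trace_eq_zero hB₁₀) hA₂.mem_span_pauli
      (hB₂.mem_span_pauli_of_trace_eq_zero hB₂₀)
  rw [coe_vsumSupport]
  exact Set.subset_union_right

theorem pauliWord_image_subset_vsum : pauliWord '' vsumSupport ⊆ Vsum := by
  rintro _ ⟨⟨⟨a, b⟩, c, d⟩, ht, rfl⟩
  simp only [coe_vsumSupport, Set.mem_union, Set.mem_prod, Set.mem_singleton_iff,
    Set.mem_compl_iff, Set.mem_univ, true_and] at ht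
  rw [SetLike.mem_coe]
  rcases ht with (⟨⟨rfl, rfl⟩, hd⟩ | ⟨hb, rfl, rfl⟩) | ⟨hb, hd⟩
  · rw [← Submodule.smul_mem_iff _ (by norm_num : (1 / 4 : ℝ) ≠ 0), pauliWord, ← smul_kronecker,
      ← quarter_smul_one_eq]
    exact Submodule.subset_span (.inl (.inl ⟨_, _, pauli_isHermitian c, pauli_isHermitian d,
      trace_pauli_of_ne_zero hd, rfl⟩))
  · rw [← Submodule.smul_mem_iff _ (by norm_num : (1 / 4 : ℝ) ≠ 0), pauliWord, ← kronecker_smul,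
      ← quarter_smul_one_eq]
    exact Submodule.subset_span (.inl (.inr ⟨_, _, pauli_isHermitian a, pauli_isHermitian b,
      trace_pauli_of_ne_zero hb, rfl⟩))
  · exact Submodule.subset_span (.inr ⟨_, _, _, _, pauli_isHermitian a, pauli_isHermitian b,
      pauli_isHermitian c, pauli_isHermitian d, trace_pauli_of_ne_zero hb,
      trace_pauli_of_ne_zero hd, rfl⟩)

theorem vsum_eq_span_pauliWord : Vsum = Submodule.span ℝ (pauliWord '' vsumSupport) :=
  le_antisymm
    (Submodule.span_le.mpr (Set.union_subset (Set.union_subset genS1_subset_span_pauliWord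
      genS2_subset_span_pauliWord) genS3_subset_span_pauliWord))
    (Submodule.span_le.mpr pauliWord_image_subset_vsum)

/-- dim_ℝ(V1 + V2 + V3) = 168, and hence the quotient
𝓑/(V1 + V2 + V3) has real dimension 88. -/
theorem stmt15 :
    Module.finrank ℝ Vsum = 168 ∧
    Module.finrank ℝ (HermB ⧸ (Vsum.comap HermB.subtype)) = 88 := by
  have hV : Module.finrank ℝ Vsum = 168 := by
    rw [vsum_eq_span_pauliWord, finrank_span_pauliWord_image, card_vsumSupport]
  have hle : Vsum ≤ HermB := by
    rw [vsum_eq_span_pauliWord, ← span_real_range_pauliWord_eq_hermB]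
    exact Submodule.span_mono (Set.image_subset_range _ _)
  refine ⟨hV, ?_⟩
  have := Submodule.finrank_quotient_comap_subtype_add hle
  rw [hV, finrank_hermB] at this
  omega
end
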